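/- The distribution function F : [0,1] → [0,1] defined by F(x) = μ([0,x]) (with F(1) := 1) is Hölder continuous with exponent log₂(3/τ), where τ = (1+√5)/2 is the golden ratio. -/

import Mathlib

open MeasureTheory Filter Topology Real
open scoped ENNReal NNReal

noncomputable section

/-- Stern's diatomic sequence: s(0)=0, s(1)=1, s(2n)=s(n), s(2n+1)=s(n)+s(n+1). -/
def stern : ℕ → ℕ
  | 0 => 0
  | 1 => 1
  | n + 2 =>
    if h : n % 2 = 0 then stern (n / 2 + 1)
    else stern (n / 2 + 1) + stern (n / 2 + 2)
decreasing_by all_goals omega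
/-- The probability measure μ_n = 3^{-n} ∑_{m=0}^{2^n-1} s(2^n+m) δ_{m/2^n} on the 1-torus. -/
def sternMeasure (n : ℕ) : Measure UnitAddCircle :=
  ((3 : ℝ≥0∞) ^ n)⁻¹ • ∑ m ∈ Finset.range (2 ^ n),
    (stern (2 ^ n + m) : ℝ≥0∞) • Measure.dirac ((m / 2 ^ n : ℝ) : UnitAddCircle)

/-!
For `N < 2 ^ n` one has `s N + s (N + 1) ≤ F_{n+2} ≤ τ ^ (n + 1)`, and refining a dyadic block
`d` times multiplies its Stern weight by at most `3 ^ d`: the block of `μ_{n+d}` sitting over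
`[q / 2 ^ n, (q + 1) / 2 ^ n)` has mass at most `(s (2 ^ n + q) + s (2 ^ n + q + 1)) / 3 ^ n`.
An interval of length at most `2⁻ⁿ` lies in an open arc covered by three such blocks (modulo 1),
so by the portmanteau theorem its `μ`-mass is `O((τ / 3) ^ n)`, and
`(τ / 3) ^ n = (2⁻ⁿ) ^ log₂ (3 / τ)`.
-/

open Finset

lemma stern_two_mul : ∀ n, stern (2 * n) = stern n
  | 0 => rfl
  | n + 1 => by
    rw [show 2 * (n + 1) = 2 * n + 2 by ring, stern]
    simp

lemma stern_two_mul_add_one : ∀ n, stern (2 * n + 1) = stern n + stern (n + 1)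
  | 0 => by simp [stern]
  | n + 1 => by
    rw [show 2 * (n + 1) + 1 = (2 * n + 1) + 2 by ring, stern]
    simp [show (2 * n + 1) / 2 = n by omega, show (2 * n + 1) % 2 = 1 by omega]

lemma stern_le_fib_and_add_stern_succ_le_fib (n : ℕ) :
    (∀ N ≤ 2 ^ n, stern N ≤ Nat.fib (n + 1)) ∧
      ∀ N < 2 ^ n, stern N + stern (N + 1) ≤ Nat.fib (n + 2) := by
  induction n with
  | zero =>
    refine ⟨fun N hN => ?_, fun N hN => ?_⟩ <;> interval_cases N <;> simp [stern]
  | succ n ih =>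
    obtain ⟨hle, hadd⟩ := ih
    have hfib : Nat.fib (n + 3) = Nat.fib (n + 1) + Nat.fib (n + 2) := Nat.fib_add_two
    have hmono : Nat.fib (n + 1) ≤ Nat.fib (n + 2) := Nat.fib_mono (by omega)
    refine ⟨fun N hN => ?_, fun N hN => ?_⟩ <;> rw [pow_succ] at hN <;>
      obtain ⟨i, rfl | rfl⟩ := Nat.even_or_odd' N
    · rw [stern_two_mul]; linarith [hle i (by omega)]
    · rw [stern_two_mul_add_one]; exact hadd i (by omega)
    · rw [stern_two_mul, stern_two_mul_add_one]; linarith [hle i (by omega), hadd i (by omega)]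
    · rw [stern_two_mul_add_one, show 2 * i + 1 + 1 = 2 * (i + 1) by ring, stern_two_mul]
      linarith [hle (i + 1) (by omega), hadd i (by omega)]

lemma stern_add_stern_succ_le_fib {n N : ℕ} (hN : N < 2 ^ n) :
    stern N + stern (N + 1) ≤ Nat.fib (n + 2) :=
  (stern_le_fib_and_add_stern_succ_le_fib n).2 N hN

lemma two_mul_sum_stern_block (r N : ℕ) :
    2 * ∑ j ∈ range (2 ^ r), stern (N * 2 ^ r + j) + stern (N + 1) =
      (3 ^ r + 1) * stern N + 3 ^ r * stern (N + 1) := by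
  induction r generalizing N with
  | zero => simp
  | succ r ih =>
    have hsplit : ∑ j ∈ range (2 ^ (r + 1)), stern (N * 2 ^ (r + 1) + j) =
        ∑ j ∈ range (2 ^ r), stern (2 * N * 2 ^ r + j) +
          ∑ j ∈ range (2 ^ r), stern ((2 * N + 1) * 2 ^ r + j) := by
      rw [pow_succ, mul_two, sum_range_add]
      congr 1 <;> refine sum_congr rfl fun j _ => congrArg stern (by ring)
    have h₀ := ih (2 * N)
    have h₁ := ih (2 * N + 1)
    rw [stern_two_mul, stern_two_mul_add_one] at h₀
    rw [show 2 * N + 1 + 1 = 2 * (N + 1) by ring, stern_two_mul, stern_two_mul_add_one] at h₁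
    rw [hsplit, pow_succ]
    linarith

lemma sum_stern_block_le (r N : ℕ) :
    ∑ j ∈ range (2 ^ r), stern (N * 2 ^ r + j) ≤ 3 ^ r * (stern N + stern (N + 1)) := by
  have h := two_mul_sum_stern_block r N
  have h3 : 1 ≤ 3 ^ r := Nat.one_le_pow _ _ (by norm_num)
  nlinarith

lemma sum_stern_row (k : ℕ) : ∑ j ∈ range (2 ^ k), stern (2 ^ k + j) = 3 ^ k := by
  have h := two_mul_sum_stern_block k 1
  simp only [one_mul, show stern 1 = 1 by simp [stern], show stern (1 + 1) = 1 by simp [stern]]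
    at h
  omega

lemma Finset.sum_range_mul_eq_sum_sum {M : Type*} [AddCommMonoid M] (f : ℕ → M) (a b : ℕ) :
    ∑ j ∈ range (a * b), f j = ∑ q ∈ range a, ∑ r ∈ range b, f (q * b + r) := by
  induction a with
  | zero => simp
  | succ a ih => rw [sum_range_succ, ← ih, add_mul, one_mul, sum_range_add]

lemma card_le_of_forall_exists_add_mul_mem_Ico {N c : ℕ} {a : ℤ} {Q : Finset ℕ}
    (hQ : ∀ q ∈ Q, q < N ∧ ∃ z : ℤ, (q : ℤ) + z * N ∈ Set.Ico a (a + c)) :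
    #Q ≤ c := by
  calc #Q ≤ #((range c).image fun i : ℕ => ((a + i) % N).toNat) := by
        refine card_le_card fun q hq => ?_
        obtain ⟨hqN, z, hz₁, hz₂⟩ := hQ q hq
        refine mem_image.2 ⟨(q + z * N - a).toNat, by rw [mem_range]; omega, ?_⟩
        rw [Int.toNat_of_nonneg (by omega), add_sub_cancel, Int.add_mul_emod_self_right,
          Int.emod_eq_of_lt (by positivity) (by exact_mod_cast hqN), Int.toNat_natCast]
    _ ≤ c := card_image_le.trans (card_range c).le

lemma sum_stern_filter_le (n d c : ℕ) (a : ℤ) (P : ℕ → Prop) [DecidablePred P]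
    (hP : ∀ q r, r < 2 ^ d → P (q * 2 ^ d + r) →
      ∃ z : ℤ, (q : ℤ) + z * 2 ^ n ∈ Set.Ico a (a + c)) :
    ∑ j ∈ range (2 ^ (n + d)) with P j, stern (2 ^ (n + d) + j) ≤
      c * (3 ^ d * Nat.fib (n + 3)) := by
  set G : ℕ → ℕ := fun q => ∑ r ∈ range (2 ^ d),
    if P (q * 2 ^ d + r) then stern (2 ^ (n + d) + (q * 2 ^ d + r)) else 0
  set Q := {q ∈ range (2 ^ n) | ∃ r < 2 ^ d, P (q * 2 ^ d + r)}
  have hG : ∀ q ∈ range (2 ^ n), G q ≠ 0 → ∃ r < 2 ^ d, P (q * 2 ^ d + r) := by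
    intro q _ hq
    obtain ⟨r, hr, hne⟩ := exists_ne_zero_of_sum_ne_zero hq
    exact ⟨r, mem_range.1 hr, by_contra fun h => hne (if_neg h)⟩
  have hGle : ∀ q ∈ Q, G q ≤ 3 ^ d * Nat.fib (n + 3) := fun q hq => by
    have hq : q < 2 ^ n := mem_range.1 (mem_filter.1 hq).1
    calc G q ≤ ∑ r ∈ range (2 ^ d), stern ((2 ^ n + q) * 2 ^ d + r) :=
          sum_le_sum fun r _ => by
            rw [show 2 ^ (n + d) + (q * 2 ^ d + r) = (2 ^ n + q) * 2 ^ d + r by ring]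
            split_ifs <;> simp
      _ ≤ 3 ^ d * (stern (2 ^ n + q) + stern (2 ^ n + q + 1)) := sum_stern_block_le d _
      _ ≤ 3 ^ d * Nat.fib (n + 3) :=
          Nat.mul_le_mul_left _ (stern_add_stern_succ_le_fib (by rw [pow_succ]; omega))
  have hQ : #Q ≤ c := card_le_of_forall_exists_add_mul_mem_Ico fun q hq => by
    obtain ⟨hq, r, hr, hPr⟩ := mem_filter.1 hq
    exact ⟨mem_range.1 hq, by exact_mod_cast hP q r hr hPr⟩
  calc ∑ j ∈ range (2 ^ (n + d)) with P j, stern (2 ^ (n + d) + j)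
      = ∑ q ∈ Q, G q := by
        rw [sum_filter, show range (2 ^ (n + d)) = range (2 ^ n * 2 ^ d) by rw [pow_add],
          Finset.sum_range_mul_eq_sum_sum, sum_filter_of_ne hG]
    _ ≤ #Q * (3 ^ d * Nat.fib (n + 3)) := sum_le_card_nsmul Q G _ hGle
    _ ≤ c * (3 ^ d * Nat.fib (n + 3)) := Nat.mul_le_mul_right _ hQ

open scoped Classical in
lemma sternMeasure_apply (k : ℕ) {U : Set UnitAddCircle} (hU : MeasurableSet U) :
    sternMeasure k U =
      ((∑ j ∈ range (2 ^ k) with (((j : ℕ) / 2 ^ k : ℝ) : UnitAddCircle) ∈ U,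
        stern (2 ^ k + j) : ℕ) : ℝ≥0∞) / 3 ^ k := by
  simp [sternMeasure, Measure.dirac_apply' _ hU, Set.indicator, sum_filter,
    ENNReal.div_eq_inv_mul]

instance (k : ℕ) : IsProbabilityMeasure (sternMeasure k) := by
  constructor
  rw [sternMeasure_apply k MeasurableSet.univ]
  simp [sum_stern_row, ENNReal.div_self]

lemma AddCircle.exists_int_add_zsmul_mem_of_coe_mem_image {p t : ℝ} {S : Set ℝ}
    (h : (t : AddCircle p) ∈ (fun y : ℝ => (y : AddCircle p)) '' S) :
    ∃ z : ℤ, t + z • p ∈ S := by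
  obtain ⟨s, hs, hst⟩ := h
  obtain ⟨z, hz⟩ := AddSubgroup.mem_zmultiples_iff.1 (QuotientAddGroup.eq.1 hst)
  exact ⟨-z, by rwa [neg_zsmul, hz, neg_add, neg_neg, add_add_neg_cancel'_right]⟩

lemma int_mem_Ico_of_add_mem_Ioo {I a b : ℤ} {θ : ℝ} (hθ₀ : 0 ≤ θ) (hθ₁ : θ < 1)
    (h : (I : ℝ) + θ ∈ Set.Ioo (a : ℝ) b) : I ∈ Set.Ico a b := by
  obtain ⟨h₁, h₂⟩ := h
  have h₁' : (a : ℝ) < I + 1 := by linarith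
  have h₂' : (I : ℝ) < b := by linarith
  exact ⟨Int.lt_add_one_iff.1 (by exact_mod_cast h₁'), by exact_mod_cast h₂'⟩

lemma sternMeasure_coe_Ioo_le (n d c : ℕ) (a : ℤ) :
    sternMeasure (n + d)
        ((fun y : ℝ => (y : UnitAddCircle)) '' Set.Ioo (a / 2 ^ n) ((a + c) / 2 ^ n))
      ≤ ((c * Nat.fib (n + 3) : ℕ) : ℝ≥0∞) / 3 ^ n := by
  classical
  have hU : IsOpen
      ((fun y : ℝ => (y : UnitAddCircle)) '' Set.Ioo (a / 2 ^ n) ((a + c) / 2 ^ n)) :=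
    QuotientAddGroup.isOpenMap_coe _ isOpen_Ioo
  rw [sternMeasure_apply _ hU.measurableSet]
  refine (ENNReal.div_le_div_right (Nat.cast_le.2 (sum_stern_filter_le n d c a _ ?_)) _).trans_eq
    ?_
  · intro q r hr hmem
    obtain ⟨z, hz⟩ := AddCircle.exists_int_add_zsmul_mem_of_coe_mem_image hmem
    rw [zsmul_one] at hz
    refine ⟨z, int_mem_Ico_of_add_mem_Ioo (θ := r / 2 ^ d) (by positivity)
      ((div_lt_one (by positivity)).2 (by exact_mod_cast hr)) ?_⟩
    have h2n : (0 : ℝ) < 2 ^ n := by positivity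
    have hscale : ((((q * 2 ^ d + r : ℕ) : ℝ) / 2 ^ (n + d)) + z) * 2 ^ n =
        ((q + z * 2 ^ n : ℤ) : ℝ) + r / 2 ^ d := by
      push_cast
      field_simp
      ring
    rw [← hscale, Int.cast_add a c, Int.cast_natCast]
    rwa [Set.mem_Ioo, div_lt_iff₀ h2n, lt_div_iff₀ h2n] at hz
  · rw [pow_add, ← ENNReal.mul_div_mul_right ((c * Nat.fib (n + 3) : ℕ) : ℝ≥0∞) (3 ^ n)
      (pow_ne_zero d three_ne_zero) (ENNReal.pow_ne_top ENNReal.ofNat_ne_top)]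
    congr 1
    push_cast
    ring

lemma le_liminf_measure_open_of_forall_tendsto_integral {Ω ι : Type*} {L : Filter ι}
    [MeasurableSpace Ω] [TopologicalSpace Ω] [OpensMeasurableSpace Ω] [HasOuterApproxClosed Ω]
    {μ : Measure Ω} [IsProbabilityMeasure μ]
    {ν : ι → Measure Ω} [∀ i, IsProbabilityMeasure (ν i)]
    (hlim : ∀ f : C(Ω, ℝ), Tendsto (fun i => ∫ x, f x ∂(ν i)) L (𝓝 (∫ x, f x ∂μ)))
    {U : Set Ω} (hU : IsOpen U) : μ U ≤ L.liminf fun i => ν i U :=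
  ProbabilityMeasure.le_liminf_measure_open_of_tendsto (μ := ⟨μ, inferInstance⟩)
    (μs := fun i => ⟨ν i, inferInstance⟩)
    (ProbabilityMeasure.tendsto_iff_forall_integral_tendsto.2 fun f => hlim f.toContinuousMap) hU

lemma measure_coe_Icc_le_of_tendsto_sternMeasure {μ : Measure UnitAddCircle}
    [IsProbabilityMeasure μ]
    (hlim : ∀ f : C(UnitAddCircle, ℝ),
      Tendsto (fun n => ∫ x, f x ∂(sternMeasure n)) atTop (𝓝 (∫ x, f x ∂μ)))
    (n : ℕ) {u v : ℝ} (huv : v - u ≤ (2 ^ n)⁻¹) :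
    μ ((fun y : ℝ => (y : UnitAddCircle)) '' Set.Icc u v) ≤
      ((3 * Nat.fib (n + 3) : ℕ) : ℝ≥0∞) / 3 ^ n := by
  -- an open arc around `Icc u v` has to start one block to the left of `⌊2 ^ n * u⌋`
  set m := ⌊2 ^ n * u⌋
  have h2n : (0 : ℝ) < 2 ^ n := by positivity
  have hsub : Set.Icc u v ⊆
      Set.Ioo (((m - 1 : ℤ) : ℝ) / 2 ^ n) (((m - 1 : ℤ) + (3 : ℕ)) / 2 ^ n) := by
    intro t ⟨hut, htv⟩
    have hm₁ := Int.floor_le (2 ^ n * u)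
    have hm₂ := Int.lt_floor_add_one (2 ^ n * u)
    have hv : 2 ^ n * v ≤ 2 ^ n * u + 1 := by
      have := mul_le_mul_of_nonneg_left huv h2n.le
      rw [mul_inv_cancel₀ h2n.ne'] at this
      linarith
    rw [Set.mem_Ioo, div_lt_iff₀ h2n, lt_div_iff₀ h2n]
    push_cast
    constructor <;> nlinarith
  have hU : IsOpen ((fun y : ℝ => (y : UnitAddCircle)) ''
      Set.Ioo (((m - 1 : ℤ) : ℝ) / 2 ^ n) (((m - 1 : ℤ) + (3 : ℕ)) / 2 ^ n)) :=
    QuotientAddGroup.isOpenMap_coe _ isOpen_Ioo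
  calc μ _ ≤ μ _ := measure_mono (Set.image_mono hsub)
    _ ≤ atTop.liminf fun k => sternMeasure k _ :=
        le_liminf_measure_open_of_forall_tendsto_integral hlim hU
    _ ≤ _ := liminf_le_of_frequently_le' <|
        (eventually_ge_atTop n).frequently.mono fun k hk => by
        obtain ⟨d, rfl⟩ := Nat.exists_eq_add_of_le hk
        exact sternMeasure_coe_Ioo_le n d 3 (m - 1)

lemma fib_succ_le_goldenRatio_pow (n : ℕ) : (Nat.fib (n + 1) : ℝ) ≤ goldenRatio ^ n := by
  have h := goldenRatio_mul_fib_succ_add_fib n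
  refine le_of_mul_le_mul_left ?_ goldenRatio_pos
  rw [← pow_succ']
  linarith [(Nat.fib n).cast_nonneg (α := ℝ)]

lemma inv_pow_rpow_logb {b x : ℝ} (hb : 0 < b) (hb₁ : b ≠ 1) (hx : 0 < x) (k : ℕ) :
    ((b ^ k)⁻¹) ^ logb b x = (x ^ k)⁻¹ := by
  rw [inv_rpow (by positivity), ← rpow_natCast, ← rpow_mul hb.le, mul_comm, rpow_mul hb.le,
    rpow_logb hb hb₁ hx, rpow_natCast]

lemma logb_two_three_div_goldenRatio_nonneg : 0 ≤ logb 2 (3 / goldenRatio) :=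
  logb_nonneg one_lt_two ((one_le_div goldenRatio_pos).2 (by linarith [goldenRatio_lt_two]))

lemma three_mul_fib_div_le {n : ℕ} {x : ℝ} (hx : (2 ^ (n + 1))⁻¹ ≤ x) :
    3 * (Nat.fib (n + 3) : ℝ) / 3 ^ n ≤ 18 * x ^ logb 2 (3 / goldenRatio) := by
  have hτ := goldenRatio_pos
  calc 3 * (Nat.fib (n + 3) : ℝ) / 3 ^ n ≤ 3 * goldenRatio ^ (n + 2) / 3 ^ n := by
        gcongr; exact fib_succ_le_goldenRatio_pow (n + 2)
    _ = 9 * goldenRatio * ((2 ^ (n + 1))⁻¹) ^ logb 2 (3 / goldenRatio) := by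
        rw [inv_pow_rpow_logb two_pos (by norm_num) (by positivity), ← inv_pow, inv_div,
          div_pow goldenRatio]
        field_simp
        ring
    _ ≤ 18 * x ^ logb 2 (3 / goldenRatio) := by
        gcongr
        · linarith [goldenRatio_lt_two]
        · exact logb_two_three_div_goldenRatio_nonneg

lemma measureReal_image_Icc_le_add {X : Type*} [MeasurableSpace X] {μ : Measure X}
    [IsFiniteMeasure μ] (g : ℝ → X) {a b c : ℝ} (hab : a ≤ b) (hbc : b ≤ c) :
    μ.real (g '' Set.Icc a c) ≤ μ.real (g '' Set.Icc a b) + μ.real (g '' Set.Icc b c) :=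
  (measureReal_mono (by rw [← Set.image_union, Set.Icc_union_Icc_eq_Icc hab hbc])).trans
    (measureReal_union_le _ _)

lemma holderOnWith_of_monotoneOn_of_sub_le {f : ℝ → ℝ} {s : Set ℝ} {C r : ℝ≥0}
    (hf : MonotoneOn f s)
    (h : ∀ x ∈ s, ∀ y ∈ s, x < y → f y - f x ≤ C * (y - x) ^ (r : ℝ)) :
    HolderOnWith C r f s := by
  intro x hx y hy
  wlog hxy : x ≤ y generalizing x y
  · rw [edist_comm, edist_comm x]; exact this y hy x hx (le_of_not_ge hxy)
  rcases hxy.eq_or_lt with rfl | hlt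
  · simp
  rw [edist_comm, edist_comm x, edist_dist, edist_dist, Real.dist_eq, Real.dist_eq,
    abs_of_nonneg (sub_nonneg.2 (hf hx hy hxy)), abs_of_pos (sub_pos.2 hlt),
    ENNReal.ofReal_rpow_of_nonneg (sub_pos.2 hlt).le r.coe_nonneg, ← ENNReal.ofReal_coe_nnreal,
    ← ENNReal.ofReal_mul C.coe_nonneg]
  exact ENNReal.ofReal_le_ofReal (h x hx y hy hlt)

/-- The distribution function F(x) = μ([0,x]) of the weak limit μ is Hölder continuous on
[0,1] with exponent log₂(3/τ), where τ is the golden ratio. -/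
theorem sternLimit_distribution_holder (μ : Measure UnitAddCircle)
    (hμ : IsProbabilityMeasure μ)
    (hlim : ∀ f : C(UnitAddCircle, ℝ),
      Tendsto (fun n => ∫ x, f x ∂(sternMeasure n)) atTop (𝓝 (∫ x, f x ∂μ)))
    (F : ℝ → ℝ)
    (hF : ∀ x : ℝ, F x =
      (μ ((fun y : ℝ => (y : UnitAddCircle)) '' Set.Icc (0 : ℝ) x)).toReal) :
    ∃ C : ℝ≥0, HolderOnWith C (Real.toNNReal (Real.logb 2 (3 / goldenRatio)))
      F (Set.Icc (0 : ℝ) 1) := by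
  have hFmono : MonotoneOn F (Set.Icc 0 1) := fun x _ y _ hxy => by
    rw [hF, hF]
    exact measureReal_mono (Set.image_mono (Set.Icc_subset_Icc_right hxy))
  refine ⟨18, holderOnWith_of_monotoneOn_of_sub_le hFmono fun u hu v hv huv => ?_⟩
  obtain ⟨n, hn₁, hn₂⟩ :=
    exists_nat_pow_near ((one_le_inv₀ (sub_pos.2 huv)).2 (by linarith [hu.1, hv.2])) one_lt_two
  rw [Real.coe_toNNReal _ logb_two_three_div_goldenRatio_nonneg]
  calc F v - F u ≤ μ.real ((fun y : ℝ => (y : UnitAddCircle)) '' Set.Icc u v) := by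
        rw [hF, hF, ← measureReal_def, ← measureReal_def]
        linarith [measureReal_image_Icc_le_add (μ := μ) (fun y : ℝ => (y : UnitAddCircle))
          hu.1 huv.le]
    _ ≤ 3 * (Nat.fib (n + 3) : ℝ) / 3 ^ n := by
        have h := measure_coe_Icc_le_of_tendsto_sternMeasure hlim n
          ((le_inv_comm₀ (by positivity) (sub_pos.2 huv)).1 hn₁)
        rw [measureReal_def]
        simpa [ENNReal.toReal_div] using ENNReal.toReal_mono
          (ENNReal.div_lt_top (ENNReal.natCast_ne_top _) (by positivity)).ne h
    _ ≤ 18 * (v - u) ^ logb 2 (3 / goldenRatio) :=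
        three_mul_fib_div_le ((inv_le_comm₀ (sub_pos.2 huv) (by positivity)).1 hn₂.le)
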